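/- Consider p vehicles in a line with discrete double-integrator dynamics, step τ, speed bound v_max, braking limit u_b < 0 and acceleration limit u_max > 0. If the horizon satisfies K·τ ≥ v_max/|u_b| + (p−1)·(1 + ⌈u_max/|u_b|⌉)·τ + τ, and there exists an admissible collision-free control over K steps, then there exists an admissible collision-free control with the same first-step controls under which every vehicle has zero velocity at step K, and no vehicle's final position exceeds its position under the original control at step K. -/

import Mathlib

/-!
Clamp each vehicle's speed from above by a braking envelope `max 0 (cᵢ - b k)`, where
`b = |u_b| τ` is the speed lost per step at full braking. The offsets start at `v_max + b`, so
nothing changes on the first step, and grow from rear to front by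
`(1 + ⌈u_max / |u_b|⌉) b ≥ b + u_max τ`; the horizon condition says precisely that the front
offset is at most `b K`, so every envelope vanishes at step `K`. A minimum of two profiles with
increments in `[u_b τ, u_max τ]` has its increments there too, and the clamped speeds never exceed
the original ones, so positions only decrease.

Order is preserved: while the front vehicle is below its envelope it moves as before and the rear
one is only slowed down. Once it reaches its envelope it stays on it, and its speed dominates the
rear vehicle's envelope, since a speed rising by at most `u_max τ` per step can reach the front
envelope at step `k + 1` only if it was already above the rear envelope at step `k`.
-/

open Set

theorem min_sub_min_mem_Icc {α : Type*} [AddCommGroup α] [LinearOrder α] [IsOrderedAddMonoid α]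
    {x x' y y' lo hi : α} (hx : x' - x ∈ Icc lo hi)
    (hy : y' - y ∈ Icc lo hi) : min x' y' - min x y ∈ Icc lo hi := by
  refine ⟨le_sub_iff_add_le'.2 ?_, sub_le_iff_le_add'.2 ?_⟩
  · rw [← min_add_add_right]
    exact min_le_min (le_sub_iff_add_le'.1 hx.1) (le_sub_iff_add_le'.1 hy.1)
  · rw [← min_add_add_right]
    exact min_le_min (sub_le_iff_le_add'.1 hx.2) (sub_le_iff_le_add'.1 hy.2)

theorem mul_le_natCeil_div_mul_mul {a β τ : ℝ} (hβ : 0 < β) (hτ : 0 ≤ τ) :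
    a * τ ≤ ⌈a / β⌉₊ * (β * τ) :=
  calc a * τ = a / β * (β * τ) := by field_simp
    _ ≤ ⌈a / β⌉₊ * (β * τ) := by gcongr; exact Nat.le_ceil _

section Trapezoid

def IsTrapezoidIntegral (τ : ℝ) (v s : ℕ → ℝ) : Prop :=
  ∀ k, s (k + 1) = s k + τ / 2 * (v k + v (k + 1))

noncomputable def trapezoidIntegral (s₀ τ : ℝ) (v : ℕ → ℝ) : ℕ → ℝ
  | 0 => s₀
  | k + 1 => trapezoidIntegral s₀ τ v k + τ / 2 * (v k + v (k + 1))

theorem isTrapezoidIntegral_trapezoidIntegral (s₀ τ : ℝ) (v : ℕ → ℝ) :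
    IsTrapezoidIntegral τ v (trapezoidIntegral s₀ τ v) :=
  fun _ => rfl

variable {τ : ℝ} {v v' s s' : ℕ → ℝ}

theorem IsTrapezoidIntegral.sub_le_sub_succ (hs : IsTrapezoidIntegral τ v s)
    (hs' : IsTrapezoidIntegral τ v' s') (hτ : 0 ≤ τ) {k : ℕ}
    (h : v k + v (k + 1) ≤ v' k + v' (k + 1)) : s' k - s k ≤ s' (k + 1) - s (k + 1) := by
  have := mul_le_mul_of_nonneg_left h (by positivity : 0 ≤ τ / 2)
  rw [hs k, hs' k]
  linarith

theorem IsTrapezoidIntegral.mono (hs : IsTrapezoidIntegral τ v s)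
    (hs' : IsTrapezoidIntegral τ v' s') (hτ : 0 ≤ τ) (h₀ : s 0 ≤ s' 0) (hv : ∀ k, v k ≤ v' k) :
    ∀ k, s k ≤ s' k
  | 0 => h₀
  | k + 1 => by
    have := hs.sub_le_sub_succ hs' hτ (add_le_add (hv k) (hv (k + 1)))
    linarith [hs.mono hs' hτ h₀ hv k]

end Trapezoid

section BrakingEnvelope

/-- The speed profile of a vehicle starting at speed `c` and losing `b` per step until it stops. -/
noncomputable def brakingEnvelope (c b : ℝ) (k : ℕ) : ℝ :=
  max 0 (c - b * k)

variable {a b c c' x x' : ℝ} {k : ℕ}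

theorem le_brakingEnvelope (h : x ≤ c - b * k) : x ≤ brakingEnvelope c b k :=
  le_max_of_le_right h

theorem brakingEnvelope_eq_zero (h : c ≤ b * k) : brakingEnvelope c b k = 0 :=
  max_eq_left (sub_nonpos.2 h)

theorem brakingEnvelope_mono_left (h : c ≤ c') : brakingEnvelope c b k ≤ brakingEnvelope c' b k :=
  max_le_max le_rfl (sub_le_sub_right h _)

theorem brakingEnvelope_succ_sub_mem_Icc (hb : 0 ≤ b) :
    brakingEnvelope c b (k + 1) - brakingEnvelope c b k ∈ Icc (-b) 0 := by
  unfold brakingEnvelope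
  push_cast
  have h₀ := le_max_left 0 (c - b * (k + 1))
  have h₁ := le_max_right 0 (c - b * (k + 1))
  constructor
  · linarith [max_le (by linarith : (0 : ℝ) ≤ max 0 (c - b * (k + 1)) + b)
      (by linarith : c - b * k ≤ max 0 (c - b * (k + 1)) + b)]
  · linarith [max_le_max (le_refl (0 : ℝ)) (by linarith : c - b * (k + 1) ≤ c - b * k)]

theorem brakingEnvelope_succ_le (hx' : 0 ≤ x') (hx : -b ≤ x' - x)
    (h : brakingEnvelope c b k ≤ x) : brakingEnvelope c b (k + 1) ≤ x' := by
  unfold brakingEnvelope at *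
  push_cast
  exact max_le hx' (by linarith [le_max_right 0 (c - b * k)])

theorem brakingEnvelope_le_of_succ_le (hc : c + b + a ≤ c') (hx : 0 ≤ x) (hx' : x' - x ≤ a)
    (h : brakingEnvelope c' b (k + 1) ≤ x') : brakingEnvelope c b k ≤ x := by
  unfold brakingEnvelope at *
  push_cast at h
  exact max_le hx (by linarith [le_max_right 0 (c' - b * (k + 1))])

theorem min_brakingEnvelope_of_le (hb : 0 ≤ b) (hc : x + b ≤ c) (hk : k ≤ 1) :
    min x (brakingEnvelope c b k) = x := by
  have : b * k ≤ b := mul_le_of_le_one_right hb (by exact_mod_cast hk)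
  exact min_eq_left (le_brakingEnvelope (by linarith))

theorem min_brakingEnvelope_succ_sub_mem_Icc {v : ℕ → ℝ} (hb : 0 ≤ b) (ha : 0 ≤ a)
    (hv : v (k + 1) - v k ∈ Icc (-b) a) :
    min (v (k + 1)) (brakingEnvelope c b (k + 1)) - min (v k) (brakingEnvelope c b k) ∈
      Icc (-b) a :=
  min_sub_min_mem_Icc hv (Icc_subset_Icc_right ha (brakingEnvelope_succ_sub_mem_Icc hb))

end BrakingEnvelope

theorem exists_brakingEnvelope_offsets {p K : ℕ} {τ vmax β a : ℝ} (hτ : 0 ≤ τ) (hβ : 0 < β)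
    (hK : vmax / β + ((p : ℝ) - 1) * (1 + (⌈a / β⌉₊ : ℝ)) * τ + τ ≤ K * τ) :
    ∃ c : Fin p → ℝ, (∀ i, vmax + β * τ ≤ c i) ∧
      (∀ i j, i < j → c i + β * τ + a * τ ≤ c j) ∧ ∀ i, c i ≤ β * τ * K := by
  set D : ℝ := 1 + ⌈a / β⌉₊
  have hD : β * τ + a * τ ≤ D * (β * τ) := by
    linarith [mul_le_natCeil_div_mul_mul (a := a) hβ hτ,
      show D * (β * τ) = β * τ + ⌈a / β⌉₊ * (β * τ) by ring]
  have hKb : vmax + ((p : ℝ) - 1) * (D * (β * τ)) + β * τ ≤ β * τ * K :=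
    calc vmax + ((p : ℝ) - 1) * (D * (β * τ)) + β * τ
        = (vmax / β + ((p : ℝ) - 1) * D * τ + τ) * β := by field_simp
      _ ≤ K * τ * β := mul_le_mul_of_nonneg_right hK hβ.le
      _ = β * τ * K := by ring
  have hDb : 0 ≤ D * (β * τ) := by positivity
  refine ⟨fun i => vmax + β * τ + (i : ℕ) * (D * (β * τ)), fun i => ?_, fun i j hij => ?_,
    fun i => ?_⟩
  · exact le_add_of_nonneg_right (by positivity)
  · have : ((i : ℕ) : ℝ) + 1 ≤ (j : ℕ) := by exact_mod_cast (hij : (i : ℕ) < j)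
    nlinarith
  · have : ((i : ℕ) : ℝ) + 1 ≤ p := by exact_mod_cast i.isLt
    nlinarith

theorem lt_of_clamp_to_brakingEnvelope {τ a b ci cj : ℝ} {K : ℕ} {vi vj si sj ti tj : ℕ → ℝ}
    (hτ : 0 ≤ τ) (ha : 0 ≤ a) (hb : 0 ≤ b) (hc : ci + b + a ≤ cj)
    (hvj : ∀ k < K, vj (k + 1) - vj k ∈ Icc (-b) a) (hvj₀ : ∀ k ≤ K, 0 ≤ vj k)
    (hsi : IsTrapezoidIntegral τ vi si) (hsj : IsTrapezoidIntegral τ vj sj)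
    (hti : IsTrapezoidIntegral τ (fun k => min (vi k) (brakingEnvelope ci b k)) ti)
    (htj : IsTrapezoidIntegral τ (fun k => min (vj k) (brakingEnvelope cj b k)) tj)
    (hti₀ : ti 0 = si 0) (htj₀ : tj 0 = sj 0) (hlt : ∀ k ≤ K, si k < sj k) :
    ∀ k ≤ K, ti k < tj k := by
  have hcij : ci ≤ cj := by linarith
  -- Either the front vehicle has not touched its envelope yet and the gap is at least the
  -- original one, or it rides on its envelope and the gap is positive.
  have key : ∀ k ≤ K, sj k - si k ≤ tj k - ti k ∨
      (brakingEnvelope cj b k ≤ vj k ∧ 0 < tj k - ti k) := by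
    intro k hk
    induction k with
    | zero => left; rw [hti₀, htj₀]
    | succ k ih =>
      have hkK : k < K := hk
      have ih := ih hkK.le
      by_cases hclamp : brakingEnvelope cj b (k + 1) ≤ vj (k + 1)
      · have hpos : 0 < tj k - ti k :=
          ih.elim (fun h => (sub_pos.2 (hlt k hkK.le)).trans_le h) And.right
        have hwk : brakingEnvelope ci b k ≤ min (vj k) (brakingEnvelope cj b k) :=
          le_min (brakingEnvelope_le_of_succ_le hc (hvj₀ k hkK.le) (hvj k hkK).2 hclamp)
            (brakingEnvelope_mono_left hcij)
        have hwk' :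
            brakingEnvelope ci b (k + 1) ≤ min (vj (k + 1)) (brakingEnvelope cj b (k + 1)) :=
          (brakingEnvelope_mono_left hcij).trans (le_min hclamp le_rfl)
        exact Or.inr ⟨hclamp, hpos.trans_le (hti.sub_le_sub_succ htj hτ
          (add_le_add ((min_le_right _ _).trans hwk) ((min_le_right _ _).trans hwk')))⟩
      · push Not at hclamp
        have hprev : sj k - si k ≤ tj k - ti k := ih.resolve_right fun h =>
          hclamp.not_ge (brakingEnvelope_succ_le (hvj₀ _ hk) (hvj k hkK).1 h.1)
        have hfree : vj k ≤ brakingEnvelope cj b k := by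
          by_contra! h
          exact hclamp.not_ge (brakingEnvelope_succ_le (hvj₀ _ hk) (hvj k hkK).1 h.le)
        have hj : tj k - sj k ≤ tj (k + 1) - sj (k + 1) :=
          hsj.sub_le_sub_succ htj hτ
            (by simp only [min_eq_left hfree, min_eq_left hclamp.le, le_refl])
        have hi : si k - ti k ≤ si (k + 1) - ti (k + 1) :=
          hti.sub_le_sub_succ hsi hτ (add_le_add (min_le_left _ _) (min_le_left _ _))
        left
        linarith
  intro k hk
  rcases key k hk with h | h
  · linarith [hlt k hk]
  · linarith [h.2]

theorem line_of_vehicles_can_stop_general (p K : ℕ) (τ vmax ub umax : ℝ)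
    (hτ : 0 < τ) (hub : ub < 0) (humax : 0 < umax)
    (hK : vmax / |ub| + ((p : ℝ) - 1) * (1 + (⌈umax / |ub|⌉₊ : ℝ)) * τ + τ ≤ (K : ℝ) * τ)
    (u s v : Fin p → ℕ → ℝ)
    (hdyn_v : ∀ i k, v i (k + 1) = v i k + u i k * τ)
    (hdyn_s : ∀ i k, s i (k + 1) = s i k + τ / 2 * (v i k + v i (k + 1)))
    (hu : ∀ i, ∀ k < K, u i k ∈ Set.Icc ub umax)
    (hv : ∀ i, ∀ k ≤ K, v i k ∈ Set.Icc 0 vmax)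
    (hsafe : ∀ k ≤ K, ∀ i j : Fin p, i < j → s i k < s j k) :
    ∃ uh sh vh : Fin p → ℕ → ℝ,
      (∀ i, sh i 0 = s i 0 ∧ vh i 0 = v i 0) ∧
      (∀ i k, vh i (k + 1) = vh i k + uh i k * τ) ∧
      (∀ i k, sh i (k + 1) = sh i k + τ / 2 * (vh i k + vh i (k + 1))) ∧
      (∀ i, uh i 0 = u i 0) ∧
      (∀ i, ∀ k < K, uh i k ∈ Set.Icc ub umax) ∧
      (∀ i, ∀ k ≤ K, vh i k ∈ Set.Icc 0 vmax) ∧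
      (∀ k ≤ K, ∀ i j : Fin p, i < j → sh i k < sh j k) ∧
      (∀ i, vh i K = 0) ∧ (∀ i, sh i K ≤ s i K) := by
  have hβ : 0 < |ub| := abs_pos.2 hub.ne
  obtain ⟨c, hc_lb, hc_lt, hc_K⟩ := exists_brakingEnvelope_offsets hτ.le hβ hK
  set b := |ub| * τ
  have hb : 0 < b := mul_pos hβ hτ
  have hub_b : ub * τ = -b := by simp only [b, abs_of_neg hub, neg_mul, neg_neg]
  have hstep (i : Fin p) (k : ℕ) (hk : k < K) : v i (k + 1) - v i k ∈ Icc (-b) (umax * τ) := by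
    rw [hdyn_v, add_sub_cancel_left, ← hub_b]
    exact ⟨by gcongr; exact (hu i k hk).1, by gcongr; exact (hu i k hk).2⟩
  have hK₁ (i : Fin p) : 1 ≤ K := by
    have : 0 ≤ vmax := (hv i 0 K.zero_le).1.trans (hv i 0 K.zero_le).2
    exact_mod_cast le_of_mul_le_mul_left (by linarith [hc_lb i, hc_K i] : b * 1 ≤ b * K) hb
  set vh : Fin p → ℕ → ℝ := fun i k => min (v i k) (brakingEnvelope (c i) b k)
  have hvh_start (i : Fin p) (k : ℕ) (hk : k ≤ 1) (hkK : k ≤ K) : vh i k = v i k :=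
    min_brakingEnvelope_of_le hb.le (by linarith [(hv i k hkK).2, hc_lb i]) hk
  refine ⟨fun i k => (vh i (k + 1) - vh i k) / τ, fun i => trapezoidIntegral (s i 0) τ (vh i), vh,
    fun i => ⟨rfl, hvh_start i 0 zero_le_one K.zero_le⟩,
    fun i k => by rw [div_mul_cancel₀ _ hτ.ne', add_sub_cancel], fun i k => rfl,
    fun i => ?_, fun i k hk => ?_, fun i k hk => ?_, fun k hk i j hij => ?_, fun i => ?_,
    fun i => (isTrapezoidIntegral_trapezoidIntegral _ _ _).mono (hdyn_s i) hτ.le le_rfl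
      (fun k => min_le_left _ _) K⟩
  · beta_reduce
    rw [hvh_start i 1 le_rfl (hK₁ i), hvh_start i 0 zero_le_one K.zero_le, hdyn_v i 0,
      add_sub_cancel_left, mul_div_cancel_right₀ _ hτ.ne']
  · have h := min_brakingEnvelope_succ_sub_mem_Icc (c := c i) hb.le (by positivity) (hstep i k hk)
    rw [← hub_b] at h
    exact ⟨(le_div_iff₀ hτ).2 h.1, (div_le_iff₀ hτ).2 h.2⟩
  · exact ⟨le_min (hv i k hk).1 (le_max_left _ _), (min_le_left _ _).trans (hv i k hk).2⟩
  · exact lt_of_clamp_to_brakingEnvelope hτ.le (by positivity) hb.le (hc_lt i j hij) (hstep j)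
      (fun k hk => (hv j k hk).1) (hdyn_s i) (hdyn_s j)
      (isTrapezoidIntegral_trapezoidIntegral _ _ _) (isTrapezoidIntegral_trapezoidIntegral _ _ _)
      rfl rfl (fun k hk => hsafe k hk i j hij) k hk
  · exact (congrArg _ (brakingEnvelope_eq_zero (hc_K i))).trans (min_eq_right (hv i K le_rfl).1)

/-- Proposition 2: `p` vehicles in a line (ordered rear to front) with
admissible collision-free controls over horizon `K` with
`K·τ ≥ v_max/|u_b| + (p−1)(1+⌈u_max/|u_b|⌉)τ + τ` admit an admissible collision-free
control with the same first-step controls under which all vehicles are stopped at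
step `K`, with final positions not exceeding the original ones. -/
theorem line_of_vehicles_can_stop (p K : ℕ) (τ vmax ub umax : ℝ)
    (hp : 0 < p) (hτ : 0 < τ) (hvmax : 0 < vmax) (hub : ub < 0) (humax : 0 < umax)
    (hK : vmax / |ub| + ((p : ℝ) - 1) * (1 + (⌈umax / |ub|⌉₊ : ℝ)) * τ + τ ≤ (K : ℝ) * τ)
    (u s v : Fin p → ℕ → ℝ)
    (hdyn_v : ∀ i k, v i (k + 1) = v i k + u i k * τ)
    (hdyn_s : ∀ i k, s i (k + 1) = s i k + τ / 2 * (v i k + v i (k + 1)))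
    (hu : ∀ i, ∀ k < K, u i k ∈ Set.Icc ub umax)
    (hv : ∀ i, ∀ k ≤ K, v i k ∈ Set.Icc 0 vmax)
    (hsafe : ∀ k ≤ K, ∀ i j : Fin p, i < j → s i k < s j k) :
    ∃ uh sh vh : Fin p → ℕ → ℝ,
      (∀ i, sh i 0 = s i 0 ∧ vh i 0 = v i 0) ∧
      (∀ i k, vh i (k + 1) = vh i k + uh i k * τ) ∧
      (∀ i k, sh i (k + 1) = sh i k + τ / 2 * (vh i k + vh i (k + 1))) ∧
      (∀ i, uh i 0 = u i 0) ∧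
      (∀ i, ∀ k < K, uh i k ∈ Set.Icc ub umax) ∧
      (∀ i, ∀ k ≤ K, vh i k ∈ Set.Icc 0 vmax) ∧
      (∀ k ≤ K, ∀ i j : Fin p, i < j → sh i k < sh j k) ∧
      (∀ i, vh i K = 0) ∧ (∀ i, sh i K ≤ s i K) :=
  line_of_vehicles_can_stop_general p K τ vmax ub umax hτ hub humax hK u s v hdyn_v hdyn_s hu hv
    hsafe
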